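/- arXiv:2502.06188 — 5 statements merged into one kernel-verified Lean document; each statement's English description precedes it below -/
import Mathlib

section
/- Let A be an index set and, for each α ∈ A, let (X_n)_{n≥1} be i.i.d. mean-zero random variables on (Ω_α, F_α, P_α) with 0 < σ̲² < Var_{P_α}(X) < σ̄² < ∞ for all α ∈ A, and fix q > 2 with E_{P_α}|X|^q < ∞ for all α. Suppose the q-th moment of X is NOT A-uniformly integrable, i.e. lim_{K→∞} sup_{α∈A} E_{P_α}(|X|^q·1{|X|^q ≥ K}) > 0. Then for every collection of constructions (Ω̃_α, F̃_α, P̃_α)_{α∈A} (with (X̃_n) equidistributed with (X_n) and (Ỹ_n) i.i.d. mean-zero Gaussian with variance Var_{P_α}(X)) one has lim_{m→∞} sup_{α∈A} P̃_α( sup_{k≥m} k^{−1/q}·|Σ_{i=1}^k (X̃_i − Ỹ_i)| ≥ 1/4 ) > 0. -/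
/-!
Let `ε` witness the failure of uniform integrability and put `c = 2 ^ q`. For every `m` some `α`
has `E[|X|^q; |X|^q ≥ 2c(m+1)] ≥ ε`; since a value `x ≥ 2c(m+1)` exceeds at least `x / (2c)` of
the levels `c(i+1)`, `i ≥ m`, this gives `∑_{i ≥ m} P(|X|^q ≥ c(i+1)) ≥ ε / (2c)`. By
independence, with probability at least `1 - exp(-ε/(4c))` some `i ≥ m` then has
`|X̃ᵢ| ≥ 2 (i+1)^{1/q}`. Gaussian tails along `(3/2)(i+1)^{1/q}` are summable uniformly in the
variance `≤ σ̄²`, so for large `m` all `|Ỹᵢ|`, `i ≥ m`, stay below that level outside a set of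
small probability. On the remaining event the jump `|X̃ᵢ - Ỹᵢ| > (i+1)^{1/q}/2` of the partial
sums forces `|Sₖ| ≥ k^{1/q}/4` for `k = i` or `k = i + 1`.
-/

open MeasureTheory ProbabilityTheory Filter Topology Real
open scoped NNReal

theorem summable_exp_neg_mul_rpow {b r : ℝ} (hb : 0 < b) (hr : 0 < r) :
    Summable fun n : ℕ => exp (-b * (n : ℝ) ^ r) := by
  have hlittle : (fun n : ℕ => exp (-b * (n : ℝ) ^ r)) =o[atTop]
      fun n : ℕ => ((n : ℝ) ^ r) ^ (-2 / r) :=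
    (isLittleO_exp_neg_mul_rpow_atTop hb _).comp_tendsto
      ((tendsto_rpow_atTop hr).comp tendsto_natCast_atTop_atTop)
  refine summable_of_isBigO_nat (Real.summable_nat_rpow.2 (by norm_num : (-2 : ℝ) < -1))
    (hlittle.isBigO.congr_right fun n => ?_)
  rw [← Real.rpow_mul n.cast_nonneg, mul_div_cancel₀ _ hr.ne']

theorem summable_exp_neg_sq_mul_rpow {a b r : ℝ} (ha : a ≠ 0) (hb : 0 < b) (hr : 0 < r) :
    Summable fun i : ℕ => exp (-(a * ((i : ℝ) + 1) ^ r) ^ 2 / b) := by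
  refine ((summable_nat_add_iff 1).2
    (summable_exp_neg_mul_rpow (b := a ^ 2 / b) (by positivity) (by positivity : 0 < 2 * r))).congr
    fun i => ?_
  rw [mul_pow, ← Real.rpow_natCast (_ ^ r), ← Real.rpow_mul (by positivity)]
  push_cast
  ring_nf

theorem hasSubgaussianMGF_id_gaussianReal {v c : ℝ≥0} (hvc : v ≤ c) :
    HasSubgaussianMGF id c (gaussianReal 0 v) where
  integrable_exp_mul t := integrable_exp_mul_gaussianReal t
  mgf_le t := by
    simp only [mgf_id_gaussianReal, zero_mul, zero_add]
    gcongr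

theorem measureReal_le_abs_le_of_map_eq_gaussianReal {Ω : Type*} [MeasurableSpace Ω]
    {μ : Measure Ω} {Y : Ω → ℝ} (hY : AEMeasurable Y μ) {v c : ℝ≥0}
    (hlaw : μ.map Y = gaussianReal 0 v) (hvc : v ≤ c) {t : ℝ} (ht : 0 ≤ t) :
    μ.real {ω | t ≤ |Y ω|} ≤ 2 * exp (-t ^ 2 / (2 * c)) := by
  have h : HasSubgaussianMGF Y c μ :=
    (HasSubgaussianMGF.id_map_iff hY).1 (hlaw ▸ hasSubgaussianMGF_id_gaussianReal hvc)
  have hsplit : {ω | t ≤ |Y ω|} = {ω | t ≤ Y ω} ∪ {ω | t ≤ (-Y) ω} := by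
    ext ω; simp only [Set.mem_ofPred_eq, Set.mem_union, le_abs, Pi.neg_apply]
  calc μ.real {ω | t ≤ |Y ω|} ≤ μ.real {ω | t ≤ Y ω} + μ.real {ω | t ≤ (-Y) ω} :=
        hsplit ▸ measureReal_union_le _ _
    _ ≤ _ := by linarith [h.measure_ge_le ht, h.neg.measure_ge_le ht]

theorem measureReal_biUnion_ge_le_tsum {Ω : Type*} [MeasurableSpace Ω] {μ : Measure Ω}
    [IsFiniteMeasure μ] {s : ℕ → Set Ω} {g : ℕ → ℝ} (hg0 : ∀ i, 0 ≤ g i) (hg : Summable g)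
    (hs : ∀ i, μ.real (s i) ≤ g i) (m : ℕ) :
    μ.real (⋃ i ≥ m, s i) ≤ ∑' j, g (j + m) := by
  have hunion : ⋃ i ≥ m, s i = ⋃ j, s (j + m) := by
    ext ω
    simp only [Set.mem_iUnion, exists_prop]
    exact ⟨fun ⟨i, hi, h⟩ => ⟨i - m, by rwa [Nat.sub_add_cancel hi]⟩,
      fun ⟨j, h⟩ => ⟨j + m, Nat.le_add_left m j, h⟩⟩
  have hsm : Summable fun j => g (j + m) := (summable_nat_add_iff m).2 hg
  rw [hunion]
  refine ENNReal.toReal_le_of_le_ofReal (tsum_nonneg fun j => hg0 _) ?_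
  calc μ (⋃ j, s (j + m)) ≤ ∑' j, μ (s (j + m)) := measure_iUnion_le _
    _ ≤ ∑' j, ENNReal.ofReal (g (j + m)) :=
        ENNReal.tsum_le_tsum fun j => ENNReal.le_ofReal_iff_toReal_le (measure_ne_top _ _)
          (hg0 _) |>.2 (hs _)
    _ = ENNReal.ofReal (∑' j, g (j + m)) :=
        (ENNReal.ofReal_tsum_of_nonneg (fun j => hg0 _) hsm).symm

theorem exists_forall_measureReal_biUnion_le_abs_lt {A : Type*} {Ω : A → Type*}
    [∀ α, MeasurableSpace (Ω α)] {μ : ∀ α, Measure (Ω α)} [∀ α, IsProbabilityMeasure (μ α)]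
    {Y : ∀ α, ℕ → Ω α → ℝ} (hY : ∀ α i, AEMeasurable (Y α i) (μ α)) {v : A → ℝ≥0} {s : ℝ≥0}
    (hlaw : ∀ α i, (μ α).map (Y α i) = gaussianReal 0 (v α)) (hv : ∀ α, v α ≤ s) (hs : 0 < s)
    {a r δ : ℝ} (ha : 0 < a) (hr : 0 < r) (hδ : 0 < δ) :
    ∃ M : ℕ, ∀ α, ∀ m ≥ M, (μ α).real (⋃ i ≥ m, {ω | a * ((i : ℝ) + 1) ^ r ≤ |Y α i ω|}) < δ := by
  set g : ℕ → ℝ := fun i => 2 * exp (-(a * ((i : ℝ) + 1) ^ r) ^ 2 / (2 * s))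
  have hg : Summable g :=
    (summable_exp_neg_sq_mul_rpow ha.ne' (by positivity) hr).mul_left 2
  obtain ⟨M, hM⟩ : ∃ M, ∀ m ≥ M, ∑' j, g (j + m) < δ :=
    eventually_atTop.1 ((tendsto_sum_nat_add g).eventually (gt_mem_nhds hδ))
  refine ⟨M, fun α m hm => (measureReal_biUnion_ge_le_tsum (fun i => by positivity) hg
    (fun i => ?_) m).trans_lt (hM m hm)⟩
  exact measureReal_le_abs_le_of_map_eq_gaussianReal (hY α i) (hlaw α i) (hv α) (by positivity)

theorem map_eval_eq_of_map_eq {Ω Ω' ι β : Type*} [MeasurableSpace Ω] [MeasurableSpace Ω']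
    [MeasurableSpace β] {μ : Measure Ω} {μ' : Measure Ω'} {X : ι → Ω → β} {X' : ι → Ω' → β}
    (hX : ∀ i, Measurable (X i)) (hX' : ∀ i, Measurable (X' i))
    (hlaw : μ'.map (fun ω i => X' i ω) = μ.map (fun ω i => X i ω)) (i : ι) :
    μ'.map (X' i) = μ.map (X i) := by
  have hmap := congrArg (Measure.map fun x : ι → β => x i) hlaw
  rwa [Measure.map_map (measurable_pi_apply i) (measurable_pi_lambda _ hX'),
    Measure.map_map (measurable_pi_apply i) (measurable_pi_lambda _ hX)] at hmap

theorem ProbabilityTheory.iIndepFun.of_map_eq {Ω Ω' ι β : Type*} [MeasurableSpace Ω]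
    [MeasurableSpace Ω'] [MeasurableSpace β] {μ : Measure Ω} {μ' : Measure Ω'}
    [IsProbabilityMeasure μ'] {X : ι → Ω → β} {X' : ι → Ω' → β}
    (hX : ∀ i, Measurable (X i)) (hX' : ∀ i, Measurable (X' i)) (hind : iIndepFun X μ)
    (hlaw : μ'.map (fun ω i => X' i ω) = μ.map (fun ω i => X i ω)) :
    iIndepFun X' μ' := by
  rw [iIndepFun_iff_map_fun_eq_infinitePi_map hX', hlaw, hind.map_fun_eq_infinitePi_map hX]
  simp_rw [map_eval_eq_of_map_eq hX hX' hlaw]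

theorem ProbabilityTheory.iIndepFun.one_sub_exp_neg_sum_le_measureReal_biUnion {Ω ι β : Type*}
    [MeasurableSpace Ω] [MeasurableSpace β] {μ : Measure Ω} [IsProbabilityMeasure μ]
    {X : ι → Ω → β} (hX : ∀ i, Measurable (X i)) (hind : iIndepFun X μ) (s : Finset ι)
    {B : ι → Set β} (hB : ∀ i, MeasurableSet (B i)) :
    1 - exp (-∑ i ∈ s, μ.real (X i ⁻¹' B i)) ≤ μ.real (⋃ i ∈ s, X i ⁻¹' B i) := by
  have hcompl : μ.real (⋃ i ∈ s, X i ⁻¹' B i)ᶜ = ∏ i ∈ s, (1 - μ.real (X i ⁻¹' B i)) := by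
    rw [Set.compl_iUnion₂]
    simp only [← Set.preimage_compl]
    rw [measureReal_def, hind.measure_inter_preimage_eq_mul s fun i _ => (hB i).compl,
      ENNReal.toReal_prod]
    exact Finset.prod_congr rfl fun i _ => by
      rw [Set.preimage_compl, ← measureReal_def, measureReal_compl ((hX i) (hB i)), probReal_univ]
  have hprod : ∏ i ∈ s, (1 - μ.real (X i ⁻¹' B i)) ≤ exp (-∑ i ∈ s, μ.real (X i ⁻¹' B i)) := by
    rw [← Finset.sum_neg_distrib, Real.exp_sum]
    exact Finset.prod_le_prod (fun i _ => sub_nonneg.2 measureReal_le_one)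
      fun i _ => Real.one_sub_le_exp_neg _
  have hmeas : MeasurableSet (⋃ i ∈ s, X i ⁻¹' B i) :=
    .biUnion s.countable_toSet fun i _ => (hX i) (hB i)
  rw [measureReal_compl hmeas, probReal_univ] at hcompl
  linarith

theorem exists_le_two_mul_add_one_forall_le {c x : ℝ} (hc : 0 < c) {m : ℕ}
    (hx : 2 * c * (m + 1) ≤ x) :
    ∃ N : ℕ, x ≤ 2 * c * (N + 1) ∧ ∀ j ≤ N, c * ((m + j : ℕ) + 1) ≤ x := by
  have hnonneg : 0 ≤ x / c - (m + 1) := by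
    rw [sub_nonneg, le_div_iff₀ hc]; nlinarith
  refine ⟨⌊x / c - (m + 1)⌋₊, ?_, fun j hj => ?_⟩
  · have hfloor := Nat.lt_floor_add_one (x / c - (m + 1))
    have hhalf : x / c / 2 ≤ x / c - (m + 1) := by
      have : 2 * (m + 1) ≤ x / c := by rw [le_div_iff₀ hc]; linarith
      linarith
    have hx_eq : x = c * (x / c) := by field_simp
    nlinarith
  · have hj' : (j : ℝ) ≤ x / c - (m + 1) := (Nat.cast_le.2 hj).trans (Nat.floor_le hnonneg)
    rw [le_sub_iff_add_le, le_div_iff₀ hc] at hj'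
    push_cast
    linarith

theorem lintegral_le_mul_tsum_measure_le {Ω : Type*} [MeasurableSpace Ω] (μ : Measure Ω)
    {f : Ω → ℝ} (hf : Measurable f) {c : ℝ} (hc : 0 < c) (m : ℕ) :
    ∫⁻ ω in {ω | 2 * c * (m + 1) ≤ f ω}, ENNReal.ofReal (f ω) ∂μ
      ≤ ENNReal.ofReal (2 * c) * ∑' j : ℕ, μ {ω | c * ((m + j : ℕ) + 1) ≤ f ω} := by
  have hE : ∀ j : ℕ, MeasurableSet {ω | c * ((m + j : ℕ) + 1) ≤ f ω} := fun j =>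
    measurableSet_le measurable_const hf
  rw [← lintegral_indicator (measurableSet_le measurable_const hf)]
  simp_rw [← lintegral_indicator_one (hE _)]
  rw [← lintegral_tsum fun j => (measurable_one.indicator (hE j)).aemeasurable,
    ← lintegral_const_mul' _ _ ENNReal.ofReal_ne_top]
  refine lintegral_mono fun ω => ?_
  by_cases hω : 2 * c * (m + 1) ≤ f ω
  · obtain ⟨N, hfN, hN⟩ := exists_le_two_mul_add_one_forall_le hc hω
    rw [Set.indicator_of_mem (s := {ω | 2 * c * (m + 1) ≤ f ω}) hω]
    calc ENNReal.ofReal (f ω) ≤ ENNReal.ofReal (2 * c) * (N + 1 : ℕ) := by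
          rw [← ENNReal.ofReal_natCast, ← ENNReal.ofReal_mul (by positivity)]
          exact ENNReal.ofReal_le_ofReal (by push_cast; exact hfN)
      _ = ENNReal.ofReal (2 * c) *
            ∑ j ∈ Finset.range (N + 1), {ω | c * ((m + j : ℕ) + 1) ≤ f ω}.indicator 1 ω := by
          rw [Finset.sum_congr rfl fun j hj => Set.indicator_of_mem
            (s := {ω | c * ((m + j : ℕ) + 1) ≤ f ω})
            (hN j (Nat.lt_succ_iff.1 (Finset.mem_range.1 hj))) (1 : Ω → ENNReal)]
          simp
      _ ≤ _ := by gcongr; exact ENNReal.sum_le_tsum _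
  · rw [Set.indicator_of_notMem (s := {ω | 2 * c * (m + 1) ≤ f ω}) hω]
    exact zero_le

theorem exists_finset_le_sum_measureReal_le {Ω : Type*} [MeasurableSpace Ω] (μ : Measure Ω)
    [IsFiniteMeasure μ] {f : Ω → ℝ} (hf : Measurable f) (hf0 : ∀ ω, 0 ≤ f ω) {c ε : ℝ}
    (hc : 0 < c) (hε : 0 < ε) (m : ℕ)
    (hmass : ε ≤ ∫ ω in {ω | 2 * c * (m + 1) ≤ f ω}, f ω ∂μ) :
    ∃ t : Finset ℕ, (∀ i ∈ t, m ≤ i) ∧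
      ε / (4 * c) ≤ ∑ i ∈ t, μ.real {ω | c * ((i : ℝ) + 1) ≤ f ω} := by
  have hlint :
      ENNReal.ofReal ε ≤ ∫⁻ ω in {ω | 2 * c * (m + 1) ≤ f ω}, ENNReal.ofReal (f ω) ∂μ := by
    rw [integral_eq_lintegral_of_nonneg_ae (ae_of_all _ hf0) hf.aestronglyMeasurable] at hmass
    exact ENNReal.ofReal_le_of_le_toReal hmass
  have htsum : ENNReal.ofReal (ε / (4 * c)) <
      ∑' j : ℕ, μ {ω | c * ((m + j : ℕ) + 1) ≤ f ω} := by
    calc ENNReal.ofReal (ε / (4 * c)) < ENNReal.ofReal ε / ENNReal.ofReal (2 * c) := by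
          rw [← ENNReal.ofReal_div_of_pos (by positivity)]
          exact (ENNReal.ofReal_lt_ofReal_iff (by positivity)).2
            (div_lt_div_of_pos_left hε (by positivity) (by linarith))
      _ ≤ _ := ENNReal.div_le_of_le_mul (mul_comm (ENNReal.ofReal (2 * c)) _ ▸
          hlint.trans (lintegral_le_mul_tsum_measure_le μ hf hc m))
  obtain ⟨s, hs⟩ := lt_iSup_iff.1 (ENNReal.tsum_eq_iSup_sum ▸ htsum)
  refine ⟨s.map (addLeftEmbedding m), fun i hi => ?_, ?_⟩
  · obtain ⟨j, -, rfl⟩ := Finset.mem_map.1 hi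
    exact Nat.le_add_right m j
  · rw [Finset.sum_map]
    rw [ENNReal.ofReal_lt_iff_lt_toReal (by positivity)
      (ENNReal.sum_ne_top.2 fun j _ => measure_ne_top _ _), ENNReal.toReal_sum
      fun j _ => measure_ne_top _ _] at hs
    exact hs.le

theorem exists_ge_quarter_le_abs_sum_div_rpow {x y : ℕ → ℝ} {q : ℝ} (hq : 0 < q) {i : ℕ}
    (hi : 1 ≤ i) (hx : 2 * ((i : ℝ) + 1) ^ (1 / q) ≤ |x i|)
    (hy : |y i| < 3 / 2 * ((i : ℝ) + 1) ^ (1 / q)) :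
    ∃ k ≥ i, 1 / 4 ≤ |∑ j ∈ Finset.range k, (x j - y j)| / (k : ℝ) ^ (1 / q) := by
  set u := ((i : ℝ) + 1) ^ (1 / q)
  set S : ℕ → ℝ := fun k => ∑ j ∈ Finset.range k, (x j - y j)
  by_contra! hsmall
  have hbound : ∀ k, i ≤ k → k ≤ i + 1 → |S k| < u / 4 := by
    intro k hik hki
    have hk : (0 : ℝ) < k := by exact_mod_cast hi.trans hik
    have hku : (k : ℝ) ^ (1 / q) ≤ u :=
      Real.rpow_le_rpow hk.le (by exact_mod_cast hki) (by positivity)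
    have := hsmall k hik
    rw [div_lt_iff₀ (by positivity)] at this
    linarith
  have hjump : x i - y i = S (i + 1) - S i := by simp only [S, Finset.sum_range_succ]; ring
  have hSi := hbound i le_rfl (Nat.le_succ i)
  have hSi' := hbound (i + 1) (Nat.le_succ i) le_rfl
  have hxy := abs_sub_abs_le_abs_sub (x i) (y i)
  rw [hjump] at hxy
  have hS := abs_sub (S (i + 1)) (S i)
  linarith

theorem two_mul_rpow_one_div_le_abs_iff {q a x : ℝ} (hq : 0 < q) (ha : 0 ≤ a) :
    2 * a ^ (1 / q) ≤ |x| ↔ 2 ^ q * a ≤ |x| ^ q := by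
  rw [← Real.rpow_le_rpow_iff (by positivity) (abs_nonneg x) hq, Real.mul_rpow (by norm_num)
    (by positivity), ← Real.rpow_mul ha, one_div_mul_cancel hq.ne', Real.rpow_one]

theorem one_sub_exp_neg_sum_le_measureReal_add {Ω : Type*} [MeasurableSpace Ω] {μ : Measure Ω}
    [IsProbabilityMeasure μ] {X : ℕ → Ω → ℝ} (hX : ∀ i, Measurable (X i))
    (hind : iIndepFun X μ) (Y : ℕ → Ω → ℝ) {q : ℝ} (hq : 0 < q) {m : ℕ} (hm : 1 ≤ m)
    (t : Finset ℕ) (ht : ∀ i ∈ t, m ≤ i) :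
    1 - exp (-∑ i ∈ t, μ.real (X i ⁻¹' {x | 2 ^ q * ((i : ℝ) + 1) ≤ |x| ^ q}))
      ≤ μ.real {ω | ∃ k ≥ m, 1 / 4 ≤ |∑ i ∈ Finset.range k, (X i ω - Y i ω)| / (k : ℝ) ^ (1 / q)}
        + μ.real (⋃ i ≥ m, {ω | 3 / 2 * ((i : ℝ) + 1) ^ (1 / q) ≤ |Y i ω|}) := by
  refine (hind.one_sub_exp_neg_sum_le_measureReal_biUnion hX t fun i =>
    measurableSet_le measurable_const (by fun_prop)).trans
    ((measureReal_mono fun ω hω => ?_).trans (measureReal_union_le _ _))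
  obtain ⟨i, hi, hXi⟩ := Set.mem_iUnion₂.1 hω
  by_cases hYi : 3 / 2 * ((i : ℝ) + 1) ^ (1 / q) ≤ |Y i ω|
  · exact Or.inr (Set.mem_iUnion₂.2 ⟨i, ht i hi, hYi⟩)
  · obtain ⟨k, hk, hlarge⟩ := exists_ge_quarter_le_abs_sum_div_rpow (x := fun i => X i ω)
      (y := fun i => Y i ω) hq (hm.trans (ht i hi))
      ((two_mul_rpow_one_div_le_abs_iff hq (by positivity)).2 hXi) (not_le.1 hYi)
    exact Or.inl ⟨k, (ht i hi).trans hk, hlarge⟩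

theorem one_sub_exp_neg_le_measureReal_add_of_le_setIntegral {Ω Ω' : Type*} [MeasurableSpace Ω]
    [MeasurableSpace Ω'] {μ : Measure Ω} [IsProbabilityMeasure μ] {μ' : Measure Ω'}
    [IsProbabilityMeasure μ'] {X : ℕ → Ω → ℝ} {X' Y' : ℕ → Ω' → ℝ}
    (hX : ∀ i, Measurable (X i)) (hX' : ∀ i, Measurable (X' i)) (hind : iIndepFun X μ)
    (hident : ∀ i, IdentDistrib (X i) (X 0) μ μ)
    (hlaw : μ'.map (fun ω i => X' i ω) = μ.map (fun ω i => X i ω))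
    {q ε : ℝ} (hq : 0 < q) (hε : 0 < ε) {m : ℕ} (hm : 1 ≤ m)
    (hmass : ε ≤ ∫ ω in {ω | 2 * 2 ^ q * ((m : ℝ) + 1) ≤ |X 0 ω| ^ q}, |X 0 ω| ^ q ∂μ) :
    1 - exp (-(ε / (4 * 2 ^ q)))
      ≤ μ'.real {ω | ∃ k ≥ m, 1 / 4 ≤ |∑ i ∈ Finset.range k, (X' i ω - Y' i ω)| / (k : ℝ) ^ (1 / q)}
        + μ'.real (⋃ i ≥ m, {ω | 3 / 2 * ((i : ℝ) + 1) ^ (1 / q) ≤ |Y' i ω|}) := by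
  obtain ⟨t, htm, hsum⟩ := exists_finset_le_sum_measureReal_le μ (by fun_prop)
    (fun ω => by positivity) (by positivity) hε m hmass
  have hident' : ∀ i, IdentDistrib (X' i) (X 0) μ' μ := fun i =>
    IdentDistrib.trans ⟨(hX' i).aemeasurable, (hX i).aemeasurable,
      map_eval_eq_of_map_eq hX hX' hlaw i⟩ (hident i)
  refine le_trans ?_ (one_sub_exp_neg_sum_le_measureReal_add hX'
    (hind.of_map_eq hX hX' hlaw) Y' hq hm t htm)
  rw [Finset.sum_congr rfl fun i _ => by
    rw [measureReal_def, (hident' i).measure_mem_eq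
      (measurableSet_le measurable_const (by fun_prop)), ← measureReal_def]]
  gcongr
  exact hsum

theorem uniform_kmt_power_moments_necessity_general
    (A : Type*) (Ω : A → Type*) [∀ α, MeasurableSpace (Ω α)]
    (P : ∀ α, Measure (Ω α)) [∀ α, IsProbabilityMeasure (P α)]
    (X : ∀ α, ℕ → Ω α → ℝ)
    (hmeas : ∀ α n, Measurable (X α n))
    (hindep : ∀ α, iIndepFun (X α) (P α))
    (hident : ∀ α n, IdentDistrib (X α n) (X α 0) (P α) (P α))
    (σl σu : ℝ)
    (hvar : ∀ α, σl ^ 2 < variance (X α 0) (P α) ∧ variance (X α 0) (P α) < σu ^ 2)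
    (q : ℝ) (hq : 2 < q)
    (hNUI : ∃ ε : ℝ, 0 < ε ∧ ∀ K : ℝ, ∃ α,
      ε ≤ ∫ ω in {ω | K ≤ |X α 0 ω| ^ q}, |X α 0 ω| ^ q ∂(P α))
    -- an arbitrary collection of constructions:
    (Ω' : A → Type*) [∀ α, MeasurableSpace (Ω' α)]
    (P' : ∀ α, Measure (Ω' α)) [∀ α, IsProbabilityMeasure (P' α)]
    (X' Y' : ∀ α, ℕ → Ω' α → ℝ)
    (hmeas' : ∀ α n, Measurable (X' α n))
    (hmeasY : ∀ α n, Measurable (Y' α n))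
    (hlaw : ∀ α, Measure.map (fun ω n => X' α n ω) (P' α)
        = Measure.map (fun ω n => X α n ω) (P α))
    (hYgauss : ∀ α n, Measure.map (Y' α n) (P' α)
        = gaussianReal 0 (variance (X α 0) (P α)).toNNReal) :
    0 < ⨅ m : ℕ, ⨆ α, (P' α) {ω | ∃ k ≥ m,
        (1 / 4 : ℝ) ≤ |∑ i ∈ Finset.range k, (X' α i ω - Y' α i ω)| / (k : ℝ) ^ (1 / q)} := by
  obtain ⟨ε, hε, hNUI⟩ := hNUI
  obtain ⟨α₀, -⟩ := hNUI 0
  have hq0 : 0 < q := by linarith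
  set δ : ℝ := (1 - exp (-(ε / (4 * 2 ^ q)))) / 2 with hδ_def
  have hδ : 0 < δ := half_pos (sub_pos.2 (exp_lt_one_iff.2 (neg_lt_zero.2 (by positivity))))
  obtain ⟨M, hM⟩ := exists_forall_measureReal_biUnion_le_abs_lt
    (fun α i => (hmeasY α i).aemeasurable) hYgauss
    (fun α => Real.toNNReal_le_toNNReal (hvar α).2.le)
    (Real.toNNReal_pos.2 ((variance_nonneg _ _).trans_lt (hvar α₀).2))
    (by norm_num : (0 : ℝ) < 3 / 2) (by positivity : 0 < 1 / q) hδ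
  refine (ENNReal.ofReal_pos.2 hδ).trans_le (le_iInf fun m => ?_)
  set m' := max m (max M 1)
  obtain ⟨α, hα⟩ := hNUI (2 * 2 ^ q * ((m' : ℝ) + 1))
  have hsplit := one_sub_exp_neg_le_measureReal_add_of_le_setIntegral (hmeas α) (hmeas' α)
    (hindep α) (hident α) (hlaw α) (Y' := Y' α) hq0 hε (by omega) hα
  have hgauss := hM α m' (by omega)
  refine le_iSup_of_le α (ENNReal.ofReal_le_of_le_toReal ?_)
  rw [← measureReal_def]
  calc δ ≤ (P' α).real {ω | ∃ k ≥ m',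
        (1 / 4 : ℝ) ≤ |∑ i ∈ Finset.range k, (X' α i ω - Y' α i ω)| / (k : ℝ) ^ (1 / q)} := by
        linarith
    _ ≤ _ := measureReal_mono <| by
        rintro ω ⟨k, hk, h⟩
        exact ⟨k, le_of_max_le_left hk, h⟩

/-- **Distribution-uniform Komlós–Major–Tusnády approximation for finite power moments,
necessity.**  Let `(X n)` be i.i.d. mean-zero on an `A`-indexed family of probability
spaces with `0 < σ̲² < Var_{P α}(X) < σ̄² < ∞`, fix `q > 2` with `E_{P α}|X|^q < ∞` for
every `α`, and suppose the `q`-th moment is NOT `A`-uniformly integrable (there is `ε > 0`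
such that for every truncation level `K` some `α` has truncated `q`-th moment at least
`ε`).  Then for every collection of constructions,
`lim_{m→∞} sup_α P̃_α( sup_{k≥m} k^{-1/q} |∑_{i≤k} (X̃ i − Ỹ i)| ≥ 1/4 ) > 0`; since the
quantity is nonincreasing in `m`, the limit is the infimum over `m`. -/
theorem uniform_kmt_power_moments_necessity
    (A : Type*) (Ω : A → Type*) [∀ α, MeasurableSpace (Ω α)]
    (P : ∀ α, Measure (Ω α)) [∀ α, IsProbabilityMeasure (P α)]
    (X : ∀ α, ℕ → Ω α → ℝ)
    (hmeas : ∀ α n, Measurable (X α n))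
    (hindep : ∀ α, iIndepFun (X α) (P α))
    (hident : ∀ α n, IdentDistrib (X α n) (X α 0) (P α) (P α))
    (hmean : ∀ α n, ∫ ω, X α n ω ∂(P α) = 0)
    (σl σu : ℝ) (hσl : 0 < σl) (hσlu : σl ≤ σu)
    (hvar : ∀ α, σl ^ 2 < variance (X α 0) (P α) ∧ variance (X α 0) (P α) < σu ^ 2)
    (q : ℝ) (hq : 2 < q)
    (hInt : ∀ α, Integrable (fun ω => |X α 0 ω| ^ q) (P α))
    (hNUI : ∃ ε : ℝ, 0 < ε ∧ ∀ K : ℝ, ∃ α,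
      ε ≤ ∫ ω in {ω | K ≤ |X α 0 ω| ^ q}, |X α 0 ω| ^ q ∂(P α))
    -- an arbitrary collection of constructions:
    (Ω' : A → Type*) [∀ α, MeasurableSpace (Ω' α)]
    (P' : ∀ α, Measure (Ω' α)) [∀ α, IsProbabilityMeasure (P' α)]
    (X' Y' : ∀ α, ℕ → Ω' α → ℝ)
    (hmeas' : ∀ α n, Measurable (X' α n))
    (hmeasY : ∀ α n, Measurable (Y' α n))
    (hlaw : ∀ α, Measure.map (fun ω n => X' α n ω) (P' α)
        = Measure.map (fun ω n => X α n ω) (P α))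
    (hYindep : ∀ α, iIndepFun (Y' α) (P' α))
    (hYgauss : ∀ α n, Measure.map (Y' α n) (P' α)
        = gaussianReal 0 (variance (X α 0) (P α)).toNNReal) :
    0 < ⨅ m : ℕ, ⨆ α, (P' α) {ω | ∃ k ≥ m,
        (1 / 4 : ℝ) ≤ |∑ i ∈ Finset.range k, (X' α i ω - Y' α i ω)| / (k : ℝ) ^ (1 / q)} :=
  uniform_kmt_power_moments_necessity_general A Ω P X hmeas hindep hident σl σu hvar q hq hNUI Ω' P'
    X' Y' hmeas' hmeasY hlaw hYgauss
end

section
/- Let A be an index set and let X be a mean-zero random variable on each probability space (Ω_α, F_α, P_α), α ∈ A, with inf_{α∈A} Var_{P_α}(X) ≥ σ̲² > 0. Suppose there exist t > 0 and C ≥ 1 with sup_{α∈A} E_{P_α}(exp{t|X|}) ≤ C. Then, with t⋆ := min{t·σ̲, 1}, X satisfies the Bernstein condition A-uniformly with parameter b̄ = 2C·σ̲·t⋆^{−3}: for every α ∈ A and every integer k ≥ 3, E_{P_α}|X|^k ≤ (k!/2)·(2C·σ̲·t⋆^{−3})^{k−2}·Var_{P_α}(X). -/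
open MeasureTheory ProbabilityTheory

lemma key_real (m : ℕ) (σl t C V : ℝ) (hσ : 0 < σl) (ht : 0 < t) (hC : 1 ≤ C)
    (hV : σl ^ 2 ≤ V) :
    (Nat.factorial (m + 3) : ℝ) * C / t ^ (m + 3)
      ≤ (Nat.factorial (m + 3) : ℝ) / 2
          * (2 * C * σl / min (t * σl) 1 ^ 3) ^ (m + 1) * V := by
  set s := min (t * σl) 1 with hs
  have hs0 : 0 < s := lt_min (by positivity) one_pos
  have hs1 : s ≤ 1 := min_le_right _ _
  have hst : s ≤ t * σl := min_le_left _ _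
  have hF : (0 : ℝ) < (Nat.factorial (m + 3) : ℝ) := by positivity
  set F : ℝ := (Nat.factorial (m + 3) : ℝ)
  have hpow : (2 * C * σl / s ^ 3) ^ (m + 1)
      = (2 * C) ^ (m + 1) * σl ^ (m + 1) / s ^ (3 * m + 3) := by
    rw [div_pow, mul_pow, ← pow_mul]
    ring_nf
  have hs2 : s ^ 2 ≤ 2 * C := by nlinarith
  have hK : (s ^ 2) ^ m ≤ (2 * C) ^ m := pow_le_pow_left₀ (by positivity) hs2 m
  have step1 : F * C / t ^ (m + 3) ≤ F * C * σl ^ (m + 3) / s ^ (m + 3) := by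
    rw [div_le_div_iff₀ (by positivity) (by positivity)]
    have : s ^ (m + 3) ≤ (t * σl) ^ (m + 3) := pow_le_pow_left₀ hs0.le hst _
    rw [mul_pow] at this
    nlinarith [this, mul_pos hF (lt_of_lt_of_le one_pos hC)]
  have e : F / 2 * ((2 * C) ^ (m + 1) * σl ^ (m + 1) / s ^ (3 * m + 3)) * σl ^ 2
      = F / 2 * (2 * C) ^ (m + 1) * σl ^ (m + 3) / s ^ (3 * m + 3) := by ring
  have step2 : F * C * σl ^ (m + 3) / s ^ (m + 3)
      ≤ F / 2 * (2 * C) ^ (m + 1) * σl ^ (m + 3) / s ^ (3 * m + 3) := by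
    rw [div_le_div_iff₀ (by positivity) (by positivity)]
    have e1 : s ^ (3 * m + 3) = (s ^ 2) ^ m * s ^ (m + 3) := by
      rw [← pow_mul, ← pow_add]; ring_nf
    have h2C : (0:ℝ) < 2 * C := by linarith
    calc F * C * σl ^ (m + 3) * s ^ (3 * m + 3)
        = (F / 2 * σl ^ (m + 3) * s ^ (m + 3)) * (2 * C * (s ^ 2) ^ m) := by
          rw [e1]; ring
      _ ≤ (F / 2 * σl ^ (m + 3) * s ^ (m + 3)) * (2 * C * (2 * C) ^ m) := by
          apply mul_le_mul_of_nonneg_left _ (by positivity)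
          exact mul_le_mul_of_nonneg_left hK h2C.le
      _ = F / 2 * (2 * C) ^ (m + 1) * σl ^ (m + 3) * s ^ (m + 3) := by
          rw [pow_succ]; ring
  have step3 : F / 2 * (2 * C * σl / s ^ 3) ^ (m + 1) * σl ^ 2
      ≤ F / 2 * (2 * C * σl / s ^ 3) ^ (m + 1) * V :=
    mul_le_mul_of_nonneg_left hV (by positivity)
  calc F * C / t ^ (m + 3) ≤ F * C * σl ^ (m + 3) / s ^ (m + 3) := step1
    _ ≤ F / 2 * (2 * C) ^ (m + 1) * σl ^ (m + 3) / s ^ (3 * m + 3) := step2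
    _ = F / 2 * (2 * C * σl / s ^ 3) ^ (m + 1) * σl ^ 2 := by rw [hpow, e]
    _ ≤ F / 2 * (2 * C * σl / s ^ 3) ^ (m + 1) * V := step3

/-- **From a uniformly bounded exponential moment to a uniform Bernstein condition.**
Let `X` be mean-zero on each `(Ω α, P α)` with `Var_{P α}(X) ≥ σ̲² > 0` uniformly, and
suppose `sup_α E_{P α} exp(t|X|) ≤ C` for some `t > 0` and `C ≥ 1`.  Then, with
`t⋆ := min (t σ̲) 1`, for every `α` and every integer `k ≥ 3`,
`E_{P α}|X|^k ≤ (k!/2) (2 C σ̲ / t⋆³)^(k−2) Var_{P α}(X)`  (expectations of nonnegative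
quantities are expressed as lower Lebesgue integrals). -/
theorem bernstein_from_exponential_moment
    (A : Type*) (Ω : A → Type*) [∀ α, MeasurableSpace (Ω α)]
    (P : ∀ α, Measure (Ω α)) [∀ α, IsProbabilityMeasure (P α)]
    (X : ∀ α, Ω α → ℝ)
    (hmeas : ∀ α, Measurable (X α))
    (hmean : ∀ α, ∫ ω, X α ω ∂(P α) = 0)
    (σl : ℝ) (hσl : 0 < σl)
    (hvar : ∀ α, σl ^ 2 ≤ variance (X α) (P α))
    (t C : ℝ) (ht : 0 < t) (hC : 1 ≤ C)
    (hexp : ∀ α, ∫⁻ ω, ENNReal.ofReal (Real.exp (t * |X α ω|)) ∂(P α)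
      ≤ ENNReal.ofReal C) :
    ∀ α, ∀ k : ℕ, 3 ≤ k →
      ∫⁻ ω, ENNReal.ofReal (|X α ω| ^ k) ∂(P α)
        ≤ ENNReal.ofReal ((Nat.factorial k : ℝ) / 2
            * (2 * C * σl / min (t * σl) 1 ^ 3) ^ (k - 2)
            * variance (X α) (P α)) := by
  intro α k hk
  obtain ⟨m, rfl⟩ : ∃ m, k = m + 3 := ⟨k - 3, by omega⟩
  have hk2 : m + 3 - 2 = m + 1 := by omega
  rw [hk2]
  set c : ℝ := (Nat.factorial (m + 3) : ℝ) / t ^ (m + 3) with hcdef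
  have hc : 0 ≤ c := by positivity
  have hpt : ∀ ω, |X α ω| ^ (m + 3) ≤ c * Real.exp (t * |X α ω|) := by
    intro ω
    have h0 := Real.pow_div_factorial_le_exp (x := t * |X α ω|) (mul_nonneg ht.le (abs_nonneg (X α ω))) (m + 3)
    rw [mul_pow, div_le_iff₀ (by positivity)] at h0
    rw [hcdef, div_mul_eq_mul_div, le_div_iff₀ (by positivity : (0:ℝ) < t ^ (m + 3))]
    nlinarith [h0]
  have hm : Measurable fun ω => ENNReal.ofReal (Real.exp (t * |X α ω|)) :=
    ENNReal.measurable_ofReal.comp (Real.measurable_exp.comp (measurable_const.mul (hmeas α).abs))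
  calc ∫⁻ ω, ENNReal.ofReal (|X α ω| ^ (m + 3)) ∂(P α)
      ≤ ∫⁻ ω, ENNReal.ofReal (c * Real.exp (t * |X α ω|)) ∂(P α) :=
        lintegral_mono fun ω => ENNReal.ofReal_le_ofReal (hpt ω)
    _ = ENNReal.ofReal c * ∫⁻ ω, ENNReal.ofReal (Real.exp (t * |X α ω|)) ∂(P α) := by
        simp_rw [ENNReal.ofReal_mul hc]
        exact lintegral_const_mul _ hm
    _ ≤ ENNReal.ofReal c * ENNReal.ofReal C := mul_le_mul_right (hexp α) _
    _ = ENNReal.ofReal (c * C) := (ENNReal.ofReal_mul hc).symm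
    _ ≤ _ := by
        apply ENNReal.ofReal_le_ofReal
        have hkey := key_real m σl t C _ hσl ht hC (hvar α)
        calc c * C = (Nat.factorial (m + 3) : ℝ) * C / t ^ (m + 3) := by
              rw [hcdef]; ring
          _ ≤ _ := hkey
end

section
/- Let A be an index set and let X be a mean-zero random variable on each probability space (Ω_α, F_α, P_α), α ∈ A. Suppose X satisfies the Bernstein condition A-uniformly with parameter b̄ > 0, i.e. for every α ∈ A and integer k ≥ 3, E_{P_α}|X|^k ≤ (k!/2)·b̄^{k−2}·Var_{P_α}(X). Then X is (λ̲, A)-Sakhanenko regular with λ̲ = 1/(7·b̄), i.e. for every α ∈ A, (1/(7b̄))·E_{P_α}( |X|³·exp{|X|/(7b̄)} ) ≤ Var_{P_α}(X). -/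
/-!
Expanding the exponential, `E |X|³ e^{c|X|} = ∑ⱼ cʲ/j! · E |X|^{j+3}`. The Bernstein condition
bounds the `j`-th term, after multiplication by `c`, by `x^{j+1} (j+3)!/(2 j!) · Var X` with
`x = c b`, and since `(j+3)!/(2 j!) = 3 (j+3 choose 3)` these bounds sum to `3x/(1-x)⁴ · Var X`.
For `c = 1/(7b)` the factor is `3·7³/6⁴ < 1`.
-/

open MeasureTheory ProbabilityTheory Nat

theorem hasSum_pow_mul_exp (n : ℕ) (c t : ℝ) :
    HasSum (fun j : ℕ => c ^ j / j ! * t ^ (j + n)) (t ^ n * Real.exp (c * t)) := by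
  rw [Real.exp_eq_exp_ℝ]
  refine ((NormedSpace.expSeries_div_hasSum_exp (c * t)).mul_left (t ^ n)).congr_fun fun j => ?_
  ring

theorem hasSum_pow_succ_mul_factorial_div {x : ℝ} (hx : |x| < 1) :
    HasSum (fun j : ℕ => x ^ (j + 1) * ((j + 3)! / (2 * j !))) (3 * x / (1 - x) ^ 4) := by
  rw [← mul_one_div]
  refine ((hasSum_choose_mul_geometric_of_norm_lt_one 3 hx).mul_left (3 * x)).congr_fun
    fun j => ?_
  rw [← Nat.add_choose_mul_factorial_mul_factorial j 3]
  push_cast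
  field_simp
  ring

section Moments

variable {Ω : Type*} [MeasurableSpace Ω] {μ : Measure Ω} {f : Ω → ℝ}

theorem lintegral_abs_pow_mul_exp_eq_tsum (hf : AEMeasurable f μ) (n : ℕ) {c : ℝ}
    (hc : 0 ≤ c) :
    ∫⁻ ω, ENNReal.ofReal (|f ω| ^ n * Real.exp (c * |f ω|)) ∂μ
      = ∑' j : ℕ, ENNReal.ofReal (c ^ j / j !) * ∫⁻ ω, ENNReal.ofReal (|f ω| ^ (j + n)) ∂μ := by
  have hseries : ∀ ω, ENNReal.ofReal (|f ω| ^ n * Real.exp (c * |f ω|))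
      = ∑' j : ℕ, ENNReal.ofReal (c ^ j / j !) * ENNReal.ofReal (|f ω| ^ (j + n)) := by
    intro ω
    have h := hasSum_pow_mul_exp n c |f ω|
    rw [← h.tsum_eq, ENNReal.ofReal_tsum_of_nonneg (fun j => by positivity) h.summable]
    exact tsum_congr fun j => ENNReal.ofReal_mul (by positivity)
  rw [lintegral_congr hseries,
    lintegral_tsum fun j => (hf.abs.pow_const _).ennreal_ofReal.const_mul _]
  exact tsum_congr fun j => lintegral_const_mul' _ _ ENNReal.ofReal_ne_top

theorem ofReal_mul_lintegral_abs_cube_mul_exp_le_of_bernstein (hf : AEMeasurable f μ)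
    {b c V : ℝ} (hb : 0 ≤ b) (hc : 0 ≤ c) (hcb : c * b < 1) (hV : 0 ≤ V)
    (hbern : ∀ k : ℕ, 3 ≤ k →
      ∫⁻ ω, ENNReal.ofReal (|f ω| ^ k) ∂μ ≤ ENNReal.ofReal (k ! / 2 * b ^ (k - 2) * V)) :
    ENNReal.ofReal c * ∫⁻ ω, ENNReal.ofReal (|f ω| ^ 3 * Real.exp (c * |f ω|)) ∂μ
      ≤ ENNReal.ofReal (3 * (c * b) / (1 - c * b) ^ 4 * V) := by
  have hsum := (hasSum_pow_succ_mul_factorial_div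
    (abs_lt.2 ⟨by nlinarith, hcb⟩)).mul_right V
  have hterm : ∀ j : ℕ, ENNReal.ofReal c
      * (ENNReal.ofReal (c ^ j / j !) * ENNReal.ofReal ((j + 3)! / 2 * b ^ (j + 1) * V))
      = ENNReal.ofReal ((c * b) ^ (j + 1) * ((j + 3)! / (2 * j !)) * V) := by
    intro j
    rw [← ENNReal.ofReal_mul (by positivity), ← ENNReal.ofReal_mul hc]
    congr 1
    field_simp
    ring
  calc ENNReal.ofReal c * ∫⁻ ω, ENNReal.ofReal (|f ω| ^ 3 * Real.exp (c * |f ω|)) ∂μ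
      = ENNReal.ofReal c * ∑' j : ℕ,
          ENNReal.ofReal (c ^ j / j !) * ∫⁻ ω, ENNReal.ofReal (|f ω| ^ (j + 3)) ∂μ := by
        rw [lintegral_abs_pow_mul_exp_eq_tsum hf 3 hc]
    _ ≤ ENNReal.ofReal c * ∑' j : ℕ,
          ENNReal.ofReal (c ^ j / j !) * ENNReal.ofReal ((j + 3)! / 2 * b ^ (j + 1) * V) := by
        gcongr with j
        exact hbern (j + 3) (by omega)
    _ = ∑' j : ℕ, ENNReal.ofReal ((c * b) ^ (j + 1) * ((j + 3)! / (2 * j !)) * V) := by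
        rw [← ENNReal.tsum_mul_left]
        exact tsum_congr hterm
    _ = ENNReal.ofReal (3 * (c * b) / (1 - c * b) ^ 4 * V) := by
        rw [← ENNReal.ofReal_tsum_of_nonneg (fun j => by positivity) hsum.summable, hsum.tsum_eq]

end Moments

theorem sakhanenko_regular_from_bernstein_general
    (A : Type*) (Ω : A → Type*) [∀ α, MeasurableSpace (Ω α)]
    (P : ∀ α, Measure (Ω α))
    (X : ∀ α, Ω α → ℝ)
    (hmeas : ∀ α, Measurable (X α))
    (b : ℝ) (hb : 0 < b)
    (hbern : ∀ α, ∀ k : ℕ, 3 ≤ k →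
      ∫⁻ ω, ENNReal.ofReal (|X α ω| ^ k) ∂(P α)
        ≤ ENNReal.ofReal ((Nat.factorial k : ℝ) / 2 * b ^ (k - 2)
            * variance (X α) (P α))) :
    ∀ α, ENNReal.ofReal (1 / (7 * b))
        * ∫⁻ ω, ENNReal.ofReal (|X α ω| ^ 3 * Real.exp (|X α ω| / (7 * b))) ∂(P α)
      ≤ ENNReal.ofReal (variance (X α) (P α)) := by
  intro α
  have hcb : (7 * b)⁻¹ * b = 1 / 7 := by field_simp
  have hV := variance_nonneg (X α) (P α)
  have h := ofReal_mul_lintegral_abs_cube_mul_exp_le_of_bernstein (c := (7 * b)⁻¹)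
    (hmeas α).aemeasurable hb.le (by positivity) (by rw [hcb]; norm_num) hV (hbern α)
  simp_rw [one_div, div_eq_inv_mul]
  refine h.trans (ENNReal.ofReal_le_ofReal ?_)
  rw [hcb]
  exact mul_le_of_le_one_left hV (by norm_num)

/-- **From a uniform Bernstein condition to Sakhanenko regularity.**  Let `X` be mean-zero
on each `(Ω α, P α)` and suppose `X` satisfies the Bernstein condition `A`-uniformly with
parameter `b̄ > 0`: `E_{P α}|X|^k ≤ (k!/2) b̄^(k−2) Var_{P α}(X)` for every integer
`k ≥ 3`.  Then `X` is `(1/(7 b̄), A)`-Sakhanenko regular: for every `α`,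
`(1/(7 b̄)) · E_{P α}(|X|³ exp(|X|/(7 b̄))) ≤ Var_{P α}(X)`  (expectations of nonnegative
quantities are expressed as lower Lebesgue integrals). -/
theorem sakhanenko_regular_from_bernstein
    (A : Type*) (Ω : A → Type*) [∀ α, MeasurableSpace (Ω α)]
    (P : ∀ α, Measure (Ω α)) [∀ α, IsProbabilityMeasure (P α)]
    (X : ∀ α, Ω α → ℝ)
    (hmeas : ∀ α, Measurable (X α))
    (hmean : ∀ α, ∫ ω, X α ω ∂(P α) = 0)
    (b : ℝ) (hb : 0 < b)
    (hbern : ∀ α, ∀ k : ℕ, 3 ≤ k →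
      ∫⁻ ω, ENNReal.ofReal (|X α ω| ^ k) ∂(P α)
        ≤ ENNReal.ofReal ((Nat.factorial k : ℝ) / 2 * b ^ (k - 2)
            * variance (X α) (P α))) :
    ∀ α, ENNReal.ofReal (1 / (7 * b))
        * ∫⁻ ω, ENNReal.ofReal (|X α ω| ^ 3 * Real.exp (|X α ω| / (7 * b))) ∂(P α)
      ≤ ENNReal.ofReal (variance (X α) (P α)) :=
  sakhanenko_regular_from_bernstein_general A Ω P X hmeas b hb hbern
end

section
/- Let I be an arbitrary index set, and for each i ∈ I let (b_n^{(i)})_{n≥1} be a positive real sequence; let (a_n)_{n≥1} be a nondecreasing, diverging positive sequence. Suppose lim_{m→∞} sup_{i∈I} Σ_{k=m}^∞ b_k^{(i)}/a_k = 0. Then there exists a nondecreasing, diverging positive sequence (ā_n)_{n≥1} with ā_n ≤ a_n for every n and ā_n / a_n → 0 monotonically, such that lim_{m→∞} sup_{i∈I} Σ_{k=m}^∞ b_k^{(i)}/ā_k = 0. -/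
open Filter Topology

lemma div_le_div_of_nonneg_right' {a b c : ℝ} (h : a ≤ b) (hc : 0 < c) :
    a / c ≤ b / c := by gcongr

lemma my_summable_ite {f : ℕ → ℝ} (hsum : Summable f) (m : ℕ) :
    Summable (fun k => if m ≤ k then f k else 0) := by
  have h := hsum.indicator {k | m ≤ k}
  refine h.congr fun k => ?_
  simp [Set.indicator_apply, Set.mem_setOf_eq]

lemma my_tail_mono {f : ℕ → ℝ} (hf : ∀ k, 0 ≤ f k) (hsum : Summable f)
    {m m' : ℕ} (h : m ≤ m') :
    (∑' k, if m' ≤ k then f k else 0) ≤ ∑' k, if m ≤ k then f k else 0 := by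
  refine Summable.tsum_le_tsum (fun k => ?_) (my_summable_ite hsum m') (my_summable_ite hsum m)
  split_ifs with h1 h2
  · exact le_rfl
  · exact absurd (h.trans h1) h2
  · exact hf k
  · exact le_rfl

lemma my_geom_tail (J : ℕ) :
    (∑' j : ℕ, if J ≤ j then ((2:ℝ)⁻¹) ^ j else 0) = 2 * (2:ℝ)⁻¹ ^ J := by
  have hgeom : Summable (fun j : ℕ => ((2:ℝ)⁻¹) ^ j) :=
    summable_geometric_of_lt_one (by norm_num) (by norm_num)
  have hs := my_summable_ite hgeom J
  rw [← Summable.sum_add_tsum_nat_add J hs]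
  have h1 : ∑ i ∈ Finset.range J, (if J ≤ i then ((2:ℝ)⁻¹) ^ i else 0) = 0 :=
    Finset.sum_eq_zero fun i hi => if_neg (by simpa using Finset.mem_range.1 hi)
  have h2 : (∑' i : ℕ, (if J ≤ i + J then ((2:ℝ)⁻¹) ^ (i + J) else 0))
      = ∑' i : ℕ, ((2:ℝ)⁻¹) ^ i * ((2:ℝ)⁻¹) ^ J := by
    refine tsum_congr fun i => ?_
    rw [if_pos (Nat.le_add_left J i), pow_add]
  rw [h1, h2, tsum_mul_right, tsum_geometric_of_lt_one (by norm_num) (by norm_num)]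
  norm_num [mul_comm]

/-- **An index-uniform generalization of Lemma 2.2 of Shao (1995).**  Let `I` be an
arbitrary index set, `(b^{(i)}_n)` positive sequences, and `(a n)` a positive nondecreasing
diverging sequence with `lim_m sup_i ∑_{k=m}^∞ b^{(i)}_k / a_k = 0`.  Then there is a
positive nondecreasing diverging sequence `(ā n)` with `ā n ≤ a n` for all `n` and
`ā n / a n → 0` monotonically, such that `lim_m sup_i ∑_{k=m}^∞ b^{(i)}_k / ā_k = 0`. -/
theorem exists_slower_sequence
    (I : Type*) (b : I → ℕ → ℝ) (a : ℕ → ℝ)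
    (hbpos : ∀ i n, 0 < b i n)
    (hapos : ∀ n, 0 < a n) (hamono : Monotone a) (hadiv : Tendsto a atTop atTop)
    (hsummable : ∀ i, Summable (fun k => b i k / a k))
    (htail : ∀ ε : ℝ, 0 < ε → ∃ m : ℕ, ∀ i,
      (∑' k : ℕ, if m ≤ k then b i k / a k else 0) ≤ ε) :
    ∃ abar : ℕ → ℝ,
      (∀ n, 0 < abar n) ∧ Monotone abar ∧ Tendsto abar atTop atTop ∧
      (∀ n, abar n ≤ a n) ∧
      Antitone (fun n => abar n / a n) ∧
      Tendsto (fun n => abar n / a n) atTop (𝓝 0) ∧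
      (∀ i, Summable (fun k => b i k / abar k)) ∧
      ∀ ε : ℝ, 0 < ε → ∃ m : ℕ, ∀ i,
        (∑' k : ℕ, if m ≤ k then b i k / abar k else 0) ≤ ε := by
  have hba_nonneg : ∀ i k, 0 ≤ b i k / a k :=
    fun i k => le_of_lt (div_pos (hbpos i k) (hapos k))
  -- choose tail cutoffs
  have hM : ∀ j : ℕ, ∃ m : ℕ, ∀ i,
      (∑' k : ℕ, if m ≤ k then b i k / a k else 0) ≤ (4:ℝ)⁻¹ ^ j :=
    fun j => htail _ (by positivity)
  choose M hMs using hM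
  -- choose divergence cutoffs
  have hN : ∀ j : ℕ, ∃ N : ℕ, ∀ n ≥ N, (4:ℝ) ^ j ≤ a n := by
    intro j
    exact (hadiv.eventually_ge_atTop ((4:ℝ) ^ j)).exists_forall_of_atTop
  choose N hNs using hN
  -- the block sequence mm
  set mm : ℕ → ℕ := fun j => Nat.rec 0
    (fun j ih => max (ih + 1) (max (M (j+1)) (N (j+1)))) j with hmm_def
  have hmm0 : mm 0 = 0 := rfl
  have hmmsucc : ∀ j, mm (j+1) = max (mm j + 1) (max (M (j+1)) (N (j+1))) := fun j => rfl
  have hmm_strict : StrictMono mm := by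
    refine strictMono_nat_of_lt_succ fun j => ?_
    rw [hmmsucc]
    exact lt_of_lt_of_le (Nat.lt_succ_self _) (le_max_left _ _)
  have hmm_le : ∀ j, j ≤ mm j := fun j => hmm_strict.le_apply
  have hmm_tail : ∀ j : ℕ, 1 ≤ j → ∀ i,
      (∑' k : ℕ, if mm j ≤ k then b i k / a k else 0) ≤ (4:ℝ)⁻¹ ^ j := by
    intro j hj i
    obtain ⟨j', rfl⟩ := Nat.exists_eq_add_of_le hj
    have hle : M (1 + j') ≤ mm (1 + j') := by
      rw [add_comm 1 j', hmmsucc]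
      exact le_trans (le_max_left _ _) (le_max_right _ _)
    exact le_trans (my_tail_mono (hba_nonneg i) (hsummable i) hle) (hMs (1 + j') i)
  have hmm_a : ∀ j : ℕ, 1 ≤ j → (4:ℝ) ^ j ≤ a (mm j) := by
    intro j hj
    obtain ⟨j', rfl⟩ := Nat.exists_eq_add_of_le hj
    have hle : N (1 + j') ≤ mm (1 + j') := by
      rw [add_comm 1 j', hmmsucc]
      exact le_trans (le_max_right _ _) (le_max_right _ _)
    exact hNs (1 + j') _ hle
  -- the block-counting function c
  set c : ℕ → ℕ := fun n => Nat.findGreatest (fun j => mm j ≤ n) n with hc_def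
  have hc_spec : ∀ n, mm (c n) ≤ n := fun n =>
    Nat.findGreatest_spec (P := fun j => mm j ≤ n) (Nat.zero_le n)
      (le_of_eq_of_le hmm0 (Nat.zero_le n))
  have hc_ge : ∀ j n, mm j ≤ n → j ≤ c n :=
    fun j n h => Nat.le_findGreatest ((hmm_le j).trans h) h
  have hc_mono : Monotone c :=
    fun n n' h => hc_ge (c n) n' ((hc_spec n).trans h)
  -- a n is large once c n ≥ 1
  have hac : ∀ n, 1 ≤ c n → (4:ℝ) ^ (c n) ≤ a n :=
    fun n h => le_trans (hmm_a (c n) h) (hamono (hc_spec n))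
  -- the auxiliary function g
  set g : ℕ → ℝ := fun n => a n * (2:ℝ)⁻¹ ^ (c n) with hg_def
  have hg_pos : ∀ n, 0 < g n := fun n => by
    have := hapos n; positivity
  have hg_le_a : ∀ n, g n ≤ a n := fun n =>
    mul_le_of_le_one_right (hapos n).le (pow_le_one₀ (by norm_num) (by norm_num))
  -- abar
  set abar : ℕ → ℝ :=
    fun n => (Finset.range (n+1)).sup' Finset.nonempty_range_add_one g with habar_def
  have habar_ge : ∀ k n, k ≤ n → g k ≤ abar n := fun k n h =>
    Finset.le_sup' g (Finset.mem_range.2 (Nat.lt_succ_of_le h))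
  have habar_pos : ∀ n, 0 < abar n := fun n =>
    lt_of_lt_of_le (hg_pos n) (habar_ge n n le_rfl)
  have habar_le_max : ∀ n x, (∀ k, k ≤ n → g k ≤ x) → abar n ≤ x := by
    intro n x h
    exact Finset.sup'_le _ _ fun k hk => h k (Nat.lt_succ_iff.1 (Finset.mem_range.1 hk))
  have habar_le_a : ∀ n, abar n ≤ a n := fun n =>
    habar_le_max n (a n) fun k hk => (hg_le_a k).trans (hamono hk)
  have habar_mono : Monotone abar := fun n n' h =>
    habar_le_max n (abar n') fun k hk => habar_ge k n' (hk.trans h)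
  -- key pointwise bound
  have hkey : ∀ i k, b i k / abar k ≤ (2:ℝ) ^ (c k) * (b i k / a k) := by
    intro i k
    have h1 : b i k / abar k ≤ b i k / g k := by
      gcongr
      exacts [(hbpos i k).le, hg_pos k, habar_ge k k le_rfl]
    refine h1.trans_eq ?_
    rw [hg_def]
    rw [div_mul_eq_div_div, div_eq_mul_inv (b i k / a k), inv_pow, inv_inv, mul_comm]
  -- core finite-sum bound
  have hcore : ∀ (i : I) (J : ℕ), 1 ≤ J → ∀ s : Finset ℕ, (∀ k ∈ s, mm J ≤ k) →
      ∑ k ∈ s, b i k / abar k ≤ 2 * (2:ℝ)⁻¹ ^ J := by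
    intro i J hJ s hs
    calc ∑ k ∈ s, b i k / abar k
        ≤ ∑ k ∈ s, (2:ℝ) ^ (c k) * (b i k / a k) :=
          Finset.sum_le_sum fun k _ => hkey i k
      _ = ∑ j ∈ s.image c, ∑ k ∈ s.filter (fun k => c k = j),
            (2:ℝ) ^ (c k) * (b i k / a k) :=
          (Finset.sum_fiberwise_of_maps_to (fun k hk => Finset.mem_image_of_mem c hk) _).symm
      _ ≤ ∑ j ∈ s.image c, (2:ℝ)⁻¹ ^ j := by
          refine Finset.sum_le_sum fun j hj => ?_
          obtain ⟨k0, hk0s, hk0⟩ := Finset.mem_image.1 hj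
          have hJj : J ≤ j := hk0 ▸ hc_ge J k0 (hs k0 hk0s)
          have h1j : 1 ≤ j := le_trans hJ hJj
          have hsum1 : ∑ k ∈ s.filter (fun k => c k = j), (2:ℝ) ^ (c k) * (b i k / a k)
              = (2:ℝ) ^ j * ∑ k ∈ s.filter (fun k => c k = j), b i k / a k := by
            rw [Finset.mul_sum]
            refine Finset.sum_congr rfl fun k hk => ?_
            rw [(Finset.mem_filter.1 hk).2]
          rw [hsum1]
          have hsum2 : ∑ k ∈ s.filter (fun k => c k = j), b i k / a k
              ≤ (4:ℝ)⁻¹ ^ j := by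
            have heq : ∑ k ∈ s.filter (fun k => c k = j), b i k / a k
                = ∑ k ∈ s.filter (fun k => c k = j),
                    (if mm j ≤ k then b i k / a k else 0) := by
              refine Finset.sum_congr rfl fun k hk => ?_
              have hck : c k = j := (Finset.mem_filter.1 hk).2
              rw [if_pos (hck ▸ hc_spec k)]
            rw [heq]
            refine le_trans (Summable.sum_le_tsum _ (fun k _ => ?_) (my_summable_ite (hsummable i) (mm j)))
              (hmm_tail j h1j i)
            split_ifs with h
            · exact hba_nonneg i k
            · exact le_rfl
          calc (2:ℝ) ^ j * ∑ k ∈ s.filter (fun k => c k = j), b i k / a k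
              ≤ (2:ℝ) ^ j * (4:ℝ)⁻¹ ^ j :=
                mul_le_mul_of_nonneg_left hsum2 (by positivity)
            _ = (2:ℝ)⁻¹ ^ j := by
                rw [← mul_pow]; norm_num
      _ ≤ ∑' j : ℕ, (if J ≤ j then ((2:ℝ)⁻¹) ^ j else 0) := by
          have heq : ∑ j ∈ s.image c, (2:ℝ)⁻¹ ^ j
              = ∑ j ∈ s.image c, (if J ≤ j then ((2:ℝ)⁻¹) ^ j else 0) := by
            refine Finset.sum_congr rfl fun j hj => ?_
            obtain ⟨k0, hk0s, hk0⟩ := Finset.mem_image.1 hj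
            rw [if_pos (hk0 ▸ hc_ge J k0 (hs k0 hk0s))]
          rw [heq]
          refine Summable.sum_le_tsum _ (fun j _ => ?_)
            (my_summable_ite (summable_geometric_of_lt_one (by norm_num) (by norm_num)) J)
          split_ifs
          · positivity
          · exact le_rfl
      _ = 2 * (2:ℝ)⁻¹ ^ J := my_geom_tail J
  -- summability
  have habar_summable : ∀ i, Summable (fun k => b i k / abar k) := by
    intro i
    rw [← summable_nat_add_iff (mm 1)]
    refine summable_of_sum_range_le (c := 2 * (2:ℝ)⁻¹ ^ 1)
      (fun n => le_of_lt (div_pos (hbpos i _) (habar_pos _))) fun n => ?_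
    have himg : ∑ k ∈ (Finset.range n).image (· + mm 1), b i k / abar k
        = ∑ k ∈ Finset.range n, b i (k + mm 1) / abar (k + mm 1) :=
      Finset.sum_image fun x _ y _ h => by omega
    rw [← himg]
    refine hcore i 1 le_rfl _ fun k hk => ?_
    obtain ⟨x, _, rfl⟩ := Finset.mem_image.1 hk
    exact Nat.le_add_left _ _
  -- divergence of abar
  have hc_tendsto : Tendsto c atTop atTop :=
    tendsto_atTop_atTop.2 fun J => ⟨mm J, fun n hn => hc_ge J n hn⟩
  have habar_div : Tendsto abar atTop atTop := by
    refine tendsto_atTop_mono' atTop ?_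
      ((tendsto_pow_atTop_atTop_of_one_lt (by norm_num : (1:ℝ) < 2)).comp hc_tendsto)
    filter_upwards [eventually_ge_atTop (mm 1)] with n hn
    have h1 : 1 ≤ c n := hc_ge 1 n hn
    have h2 : (4:ℝ) ^ (c n) ≤ a n := hac n h1
    have h3 : (2:ℝ) ^ (c n) ≤ g n := by
      rw [hg_def]
      calc (2:ℝ) ^ (c n) = (4:ℝ) ^ (c n) * (2:ℝ)⁻¹ ^ (c n) := by
            rw [← mul_pow]; norm_num
        _ ≤ a n * (2:ℝ)⁻¹ ^ (c n) :=
            mul_le_mul_of_nonneg_right h2 (by positivity)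
    exact le_trans h3 (habar_ge n n le_rfl)
  -- antitone quotient
  have hanti : Antitone (fun n => abar n / a n) := by
    refine antitone_nat_of_succ_le fun n => ?_
    have hsucc : abar (n+1) = g (n+1) ⊔ abar n := by
      refine le_antisymm (habar_le_max (n+1) _ fun k hk => ?_)
        (max_le (habar_ge (n+1) (n+1) le_rfl) (habar_mono (Nat.le_succ n)))
      rcases Nat.lt_succ_iff_lt_or_eq.1 (Nat.lt_succ_of_le hk) with h | rfl
      · exact le_max_of_le_right (habar_ge k n (Nat.lt_succ_iff.1 h))
      · exact le_max_left _ _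
    show abar (n+1) / a (n+1) ≤ abar n / a n
    rw [hsucc, ← max_div_div_right (hapos (n+1)).le]
    refine max_le ?_ ?_
    · have h1 : g (n+1) / a (n+1) = (2:ℝ)⁻¹ ^ (c (n+1)) := by
        simp only [hg_def]
        exact mul_div_cancel_left₀ _ (hapos _).ne'
      have h2 : g n / a n = (2:ℝ)⁻¹ ^ (c n) := by
        simp only [hg_def]
        exact mul_div_cancel_left₀ _ (hapos _).ne'
      rw [h1]
      calc (2:ℝ)⁻¹ ^ (c (n+1)) ≤ (2:ℝ)⁻¹ ^ (c n) :=
            pow_le_pow_of_le_one (by norm_num) (by norm_num) (hc_mono (Nat.le_succ n))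
        _ = g n / a n := h2.symm
        _ ≤ abar n / a n := div_le_div_of_nonneg_right' (habar_ge n n le_rfl) (hapos n)
    · exact div_le_div_of_nonneg_left (habar_pos n).le (hapos n) (hamono (Nat.le_succ n))
  -- tendsto of quotient to 0
  have hquot : Tendsto (fun n => abar n / a n) atTop (𝓝 0) := by
    rw [NormedAddCommGroup.tendsto_nhds_zero]
    intro ε hε
    obtain ⟨J, hJ⟩ := exists_pow_lt_of_lt_one hε (by norm_num : (2:ℝ)⁻¹ < 1)
    have hbound : ∀ n, abar n ≤ max (a (mm J)) (a n * (2:ℝ)⁻¹ ^ J) := by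
      intro n
      refine habar_le_max n _ fun k hk => ?_
      rcases lt_or_ge k (mm J) with h | h
      · exact le_max_of_le_left ((hg_le_a k).trans (hamono h.le))
      · refine le_max_of_le_right ?_
        rw [hg_def]
        have hJc : J ≤ c k := hc_ge J k h
        exact mul_le_mul (hamono hk)
          (pow_le_pow_of_le_one (by norm_num) (by norm_num) hJc)
          (by positivity) (hapos n).le
    have hconst : Tendsto (fun n => a (mm J) / a n) atTop (𝓝 0) :=
      tendsto_const_nhds.div_atTop hadiv
    filter_upwards [hconst.eventually_lt_const hε] with n hn
    have h0 : 0 ≤ abar n / a n := div_nonneg (habar_pos n).le (hapos n).le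
    rw [Real.norm_eq_abs, abs_of_nonneg h0]
    have : abar n / a n ≤ max (a (mm J) / a n) ((2:ℝ)⁻¹ ^ J) := by
      calc abar n / a n ≤ max (a (mm J)) (a n * (2:ℝ)⁻¹ ^ J) / a n :=
            div_le_div_of_nonneg_right' (hbound n) (hapos n)
        _ = max (a (mm J) / a n) (a n * (2:ℝ)⁻¹ ^ J / a n) :=
            (max_div_div_right (hapos n).le _ _).symm
        _ = max (a (mm J) / a n) ((2:ℝ)⁻¹ ^ J) := by
            rw [mul_div_cancel_left₀ _ (hapos n).ne']
    exact lt_of_le_of_lt this (max_lt hn hJ)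
  -- final tail bound
  refine ⟨abar, habar_pos, habar_mono, habar_div, habar_le_a, hanti, hquot,
    habar_summable, ?_⟩
  intro ε hε
  obtain ⟨J0, hJ0⟩ := exists_pow_lt_of_lt_one (half_pos hε) (by norm_num : (2:ℝ)⁻¹ < 1)
  refine ⟨mm (J0 + 1), fun i => ?_⟩
  have hb2 : 2 * (2:ℝ)⁻¹ ^ (J0 + 1) ≤ ε := by
    have h1 : (2:ℝ)⁻¹ ^ (J0 + 1) ≤ (2:ℝ)⁻¹ ^ J0 :=
      pow_le_pow_of_le_one (by norm_num) (by norm_num) (Nat.le_succ J0)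
    nlinarith [hJ0]
  refine le_trans (Summable.tsum_le_of_sum_le (my_summable_ite (habar_summable i) (mm (J0+1)))
    fun s => ?_) hb2
  rw [← Finset.sum_filter]
  exact hcore i (J0 + 1) (Nat.le_add_left 1 J0) _ fun k hk => (Finset.mem_filter.1 hk).2
end

section
/- Fix q > 2. Let (X_n)_{n≥1} be i.i.d. random variables on (Ω, F, P) with mean zero, variance σ², and E_P|X|^q < ∞. Let (Ỹ_n)_{n≥1} be independent mean-zero Gaussian random variables on (Ω̃, F̃, P̃) with variances σ̃_k² := Var_{P̃}(Ỹ_k) = Var_P( X·1{|X| ≤ k^{1/q}} ), and set Ŷ_k := (σ/σ̃_k)·Ỹ_k. Then there exists a constant C(q) > 0 depending only on q such that for every integer m ≥ 1: Σ_{k=m}^∞ Var_{P̃}(Ỹ_k − Ŷ_k) / k^{2/q} ≤ 4·C(q)·E_P( |X|^q·1{|X|^q > m} ). -/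
open MeasureTheory ProbabilityTheory

universe u

/-!
Since `Ŷ_k` is a multiple of `Ỹ_k`, `Var(Ỹ_k - Ŷ_k) = (σ̃_k - σ)²`, which is at most
`σ² - σ̃_k²` because `σ̃_k ≤ σ`. As `X` is centred, truncating it at level `k^{1/q}` lowers the
variance by the tail second moment plus the square of the tail mean, hence by at most
`2 E[X² 1{|X|^q > k}]`. Summing against `k^{-2/q}` and exchanging sum and expectation, the
claim reduces to `∑_{m ≤ k < t} k^{-2/q} ≤ t^{1-2/q} / (1 - 2/q)` at `t = |X|^q`, which
telescopes from the concavity bound `(1 - p) k^{-p} ≤ k^{1-p} - (k-1)^{1-p}`; this gives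
`C(q) = q / (2(q - 2))`.
-/

open Finset

namespace Real

lemma rpow_le_rpow_add_mul_rpow_sub_one_mul_sub {x y β : ℝ} (hx : 0 ≤ x) (hy : 0 < y)
    (hβ₀ : 0 ≤ β) (hβ₁ : β ≤ 1) :
    x ^ β ≤ y ^ β + β * y ^ (β - 1) * (x - y) := by
  have hratio : 0 ≤ x / y := div_nonneg hx hy.le
  have hbernoulli : (x / y) ^ β ≤ 1 + β * (x / y - 1) := by
    simpa using rpow_one_add_le_one_add_mul_self (s := x / y - 1) (by linarith) hβ₀ hβ₁
  calc x ^ β = (x / y) ^ β * y ^ β := by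
        rw [← mul_rpow hratio hy.le, div_mul_cancel₀ _ hy.ne']
    _ ≤ (1 + β * (x / y - 1)) * y ^ β := by gcongr
    _ = y ^ β + β * (y ^ β / y) * (x - y) := by field_simp
    _ = _ := by rw [rpow_sub_one hy.ne']

lemma sum_Icc_rpow_neg_le {p : ℝ} (hp₀ : 0 ≤ p) (hp₁ : p < 1) (N : ℕ) :
    ∑ k ∈ Icc 1 N, (k : ℝ) ^ (-p) ≤ (N : ℝ) ^ (1 - p) / (1 - p) := by
  induction N with
  | zero => simp [zero_rpow (by linarith : (1 : ℝ) - p ≠ 0)]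
  | succ N ih =>
    have htangent := rpow_le_rpow_add_mul_rpow_sub_one_mul_sub (N.cast_nonneg' (α := ℝ))
      (N.cast_add_one_pos (α := ℝ)) (by linarith : 0 ≤ 1 - p) (by linarith : 1 - p ≤ 1)
    rw [sum_Icc_succ_top (by omega), le_div_iff₀ (by linarith)]
    rw [le_div_iff₀ (by linarith)] at ih
    push_cast at htangent ⊢
    rw [show 1 - p - 1 = -p by ring] at htangent
    nlinarith

lemma sum_rpow_neg_le_of_forall_le {p t : ℝ} (hp₀ : 0 ≤ p) (hp₁ : p < 1) (ht : 0 ≤ t)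
    {s : Finset ℕ} (hs : ∀ k ∈ s, 1 ≤ k ∧ (k : ℝ) ≤ t) :
    ∑ k ∈ s, (k : ℝ) ^ (-p) ≤ t ^ (1 - p) / (1 - p) := by
  have hsub : s ⊆ Icc 1 ⌊t⌋₊ := fun k hk =>
    mem_Icc.2 ⟨(hs k hk).1, Nat.le_floor (hs k hk).2⟩
  calc ∑ k ∈ s, (k : ℝ) ^ (-p)
      ≤ ∑ k ∈ Icc 1 ⌊t⌋₊, (k : ℝ) ^ (-p) :=
        sum_le_sum_of_subset_of_nonneg hsub fun k _ _ => rpow_nonneg k.cast_nonneg _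
    _ ≤ (⌊t⌋₊ : ℝ) ^ (1 - p) / (1 - p) := sum_Icc_rpow_neg_le hp₀ hp₁ _
    _ ≤ t ^ (1 - p) / (1 - p) := by
        gcongr
        exact Nat.floor_le ht

end Real

lemma sum_sq_div_rpow_le {q : ℝ} (hq : 2 < q) {m : ℕ} (hm : 1 ≤ m) {s : Finset ℕ}
    (hs : ∀ k ∈ s, m ≤ k) (x : ℝ) :
    ∑ k ∈ s, (if (k : ℝ) < |x| ^ q then x ^ 2 else 0) / (k : ℝ) ^ (2 / q) ≤
      q / (q - 2) * (if (m : ℝ) < |x| ^ q then |x| ^ q else 0) := by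
  have hq₀ : 0 < q := by linarith
  split_ifs with hx
  · have hp₁ : 2 / q < 1 := (div_lt_one hq₀).2 hq
    have hfilter := Real.sum_rpow_neg_le_of_forall_le (div_nonneg zero_le_two hq₀.le) hp₁
      (Real.rpow_nonneg (abs_nonneg x) q)
      (s := s.filter fun k : ℕ => (k : ℝ) < |x| ^ q) fun k hk => by
        rw [mem_filter] at hk
        exact ⟨hm.trans (hs k hk.1), hk.2.le⟩
    have hxq : x ^ 2 * (|x| ^ q) ^ (1 - 2 / q) = |x| ^ q := by
      rw [← Real.rpow_mul (abs_nonneg x), ← sq_abs, ← Real.rpow_natCast,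
        ← Real.rpow_add' (abs_nonneg x) (by field_simp; linarith)]
      congr 1
      field_simp
      ring
    calc ∑ k ∈ s, (if (k : ℝ) < |x| ^ q then x ^ 2 else 0) / (k : ℝ) ^ (2 / q)
        = x ^ 2 *
            ∑ k ∈ s.filter fun k : ℕ => (k : ℝ) < |x| ^ q, (k : ℝ) ^ (-(2 / q)) := by
          rw [mul_sum, sum_filter]
          refine sum_congr rfl fun k _ => ?_
          split_ifs <;> simp [Real.rpow_neg k.cast_nonneg, div_eq_mul_inv]
      _ ≤ x ^ 2 * ((|x| ^ q) ^ (1 - 2 / q) / (1 - 2 / q)) := by gcongr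
      _ = q / (q - 2) * (x ^ 2 * (|x| ^ q) ^ (1 - 2 / q)) := by
          field_simp
      _ = q / (q - 2) * |x| ^ q := by rw [hxq]
  · refine (sum_eq_zero fun k hk => ?_).le.trans_eq (mul_zero _).symm
    have hk : ¬ (k : ℝ) < |x| ^ q := fun h => hx ((Nat.cast_le.2 (hs k hk)).trans_lt h)
    simp [hk]

lemma sum_setIntegral_sq_div_rpow_le {Ω : Type*} [MeasurableSpace Ω] {μ : Measure Ω}
    {X : Ω → ℝ} {q : ℝ} (hq : 2 < q) (hX : Measurable X)
    (hX₂ : Integrable (fun ω => X ω ^ 2) μ) (hXq : Integrable (fun ω => |X ω| ^ q) μ)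
    {m : ℕ} (hm : 1 ≤ m) {s : Finset ℕ} (hs : ∀ k ∈ s, m ≤ k) :
    ∑ k ∈ s, (∫ ω in {ω | (k : ℝ) < |X ω| ^ q}, X ω ^ 2 ∂μ) / (k : ℝ) ^ (2 / q) ≤
      q / (q - 2) * ∫ ω in {ω | (m : ℝ) < |X ω| ^ q}, |X ω| ^ q ∂μ := by
  have hA : ∀ k : ℕ, MeasurableSet {ω | (k : ℝ) < |X ω| ^ q} := fun k =>
    measurableSet_lt measurable_const (hX.abs.pow_const q)
  have hind : ∀ (k : ℕ) (f : Ω → ℝ), {ω | (k : ℝ) < |X ω| ^ q}.indicator f =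
      fun ω => if (k : ℝ) < |X ω| ^ q then f ω else 0 := fun k f => rfl
  calc ∑ k ∈ s, (∫ ω in {ω | (k : ℝ) < |X ω| ^ q}, X ω ^ 2 ∂μ) / (k : ℝ) ^ (2 / q)
      = ∫ ω, ∑ k ∈ s,
          (if (k : ℝ) < |X ω| ^ q then X ω ^ 2 else 0) / (k : ℝ) ^ (2 / q) ∂μ := by
        rw [integral_finsetSum _ fun k _ => ?_]
        · refine sum_congr rfl fun k _ => ?_
          rw [integral_div, ← integral_indicator (hA k), hind]
        · exact (hind k _ ▸ hX₂.indicator (hA k)).div_const _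
    _ ≤ ∫ ω, q / (q - 2) * (if (m : ℝ) < |X ω| ^ q then |X ω| ^ q else 0) ∂μ :=
        integral_mono (integrable_finsetSum _ fun k _ =>
            (hind k _ ▸ hX₂.indicator (hA k)).div_const _)
          ((hind m _ ▸ hXq.indicator (hA m)).const_mul _)
          fun ω => sum_sq_div_rpow_le hq hm hs (X ω)
    _ = q / (q - 2) * ∫ ω in {ω | (m : ℝ) < |X ω| ^ q}, |X ω| ^ q ∂μ := by
        rw [integral_const_mul, ← integral_indicator (hA m), hind]

section Truncation

variable {Ω : Type*} [MeasurableSpace Ω] {μ : Measure Ω} [IsProbabilityMeasure μ]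
  {X : Ω → ℝ} {s : Set Ω}

lemma variance_indicator (hX : MemLp X 2 μ) (hs : MeasurableSet s) :
    variance (s.indicator X) μ = ∫ ω in s, X ω ^ 2 ∂μ - (∫ ω in s, X ω ∂μ) ^ 2 := by
  rw [variance_eq_sub (hX.indicator hs), ← integral_indicator hs, ← integral_indicator hs]
  congr 2
  ext ω
  by_cases hω : ω ∈ s <;> simp [hω]

lemma variance_sub_variance_indicator_compl (hX : MemLp X 2 μ) (hmean : μ[X] = 0)
    (hs : MeasurableSet s) :
    variance X μ - variance (sᶜ.indicator X) μ =
      ∫ ω in s, X ω ^ 2 ∂μ + (∫ ω in s, X ω ∂μ) ^ 2 := by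
  have hsq := integral_add_compl hs hX.integrable_sq
  have hlin := integral_add_compl hs (hX.integrable one_le_two)
  rw [variance_indicator hX hs.compl, variance_eq_sub hX, hmean]
  simp only [Pi.pow_apply] at hsq hlin ⊢
  rw [← hsq, show ∫ ω in sᶜ, X ω ∂μ = -∫ ω in s, X ω ∂μ by linarith]
  ring

lemma variance_indicator_compl_le (hX : MemLp X 2 μ) (hmean : μ[X] = 0)
    (hs : MeasurableSet s) : variance (sᶜ.indicator X) μ ≤ variance X μ := by
  have hdiff := variance_sub_variance_indicator_compl hX hmean hs
  have hsq : 0 ≤ ∫ ω in s, X ω ^ 2 ∂μ := setIntegral_nonneg hs fun ω _ => sq_nonneg (X ω)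
  nlinarith [sq_nonneg (∫ ω in s, X ω ∂μ)]

lemma variance_sub_variance_indicator_compl_le (hX : MemLp X 2 μ) (hmean : μ[X] = 0)
    (hs : MeasurableSet s) :
    variance X μ - variance (sᶜ.indicator X) μ ≤ 2 * ∫ ω in s, X ω ^ 2 ∂μ := by
  have hjensen := variance_nonneg (s.indicator X) μ
  rw [variance_indicator hX hs] at hjensen
  rw [variance_sub_variance_indicator_compl hX hmean hs]
  linarith

end Truncation

lemma variance_sub_div_sqrt_variance_mul_le {Ω : Type*} [MeasurableSpace Ω] {μ : Measure Ω}
    {Y : Ω → ℝ} {σ : ℝ} (hσ : 0 ≤ σ) (hle : variance Y μ ≤ σ ^ 2) :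
    variance (fun ω => Y ω - σ / √(variance Y μ) * Y ω) μ ≤ σ ^ 2 - variance Y μ := by
  simp_rw [← one_sub_mul]
  rw [variance_const_mul]
  have hv : 0 ≤ variance Y μ := variance_nonneg Y μ
  generalize variance Y μ = v at hv hle ⊢
  rcases hv.eq_or_lt with rfl | hvpos
  · rw [mul_zero, sub_zero]
    positivity
  · have hsqrt_le : √v ≤ σ := Real.sqrt_le_iff.2 ⟨hσ, hle⟩
    have hsqrt_pos : 0 < √v := Real.sqrt_pos.2 hvpos
    have hsq : √v ^ 2 = v := Real.sq_sqrt hv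
    calc (1 - σ / √v) ^ 2 * v = (σ - √v) ^ 2 := by
          field_simp
          rw [hsq]
          ring
      _ ≤ (σ - √v) * (σ + √v) := by nlinarith
      _ = σ ^ 2 - v := by linear_combination -hsq

lemma variance_sub_rescaled_gaussian_le {Ω Ω' : Type*} [MeasurableSpace Ω]
    [MeasurableSpace Ω'] {P : Measure Ω} [IsProbabilityMeasure P] {P' : Measure Ω'}
    {X : Ω → ℝ} {σ : ℝ} {s : Set Ω} {Y : Ω' → ℝ} (hX : MemLp X 2 P) (hmean : P[X] = 0)
    (hσ : 0 ≤ σ) (hvar : variance X P = σ ^ 2) (hs : MeasurableSet s) (hY : AEMeasurable Y P')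
    (hlaw : P'.map Y = gaussianReal 0 (variance (sᶜ.indicator X) P).toNNReal) :
    variance (fun ω => Y ω - σ / √(variance (sᶜ.indicator X) P) * Y ω) P' ≤
      2 * ∫ ω in s, X ω ^ 2 ∂P := by
  have hYvar : variance Y P' = variance (sᶜ.indicator X) P := by
    rw [(HasLaw.mk hY hlaw).variance_eq, variance_id_gaussianReal,
      Real.coe_toNNReal _ (variance_nonneg _ _)]
  rw [← hYvar]
  refine (variance_sub_div_sqrt_variance_mul_le hσ ?_).trans ?_ <;> rw [hYvar, ← hvar]
  · exact variance_indicator_compl_le hX hmean hs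
  · exact variance_sub_variance_indicator_compl_le hX hmean hs

lemma memLp_two_of_integrable_abs_rpow {Ω : Type*} [MeasurableSpace Ω] {μ : Measure Ω}
    [IsFiniteMeasure μ] {X : Ω → ℝ} {q : ℝ} (hq : 2 ≤ q) (hX : AEStronglyMeasurable X μ)
    (hXq : Integrable (fun ω => |X ω| ^ q) μ) : MemLp X 2 μ := by
  rw [memLp_two_iff_integrable_sq hX]
  simpa using integrable_norm_rpow_of_le hX zero_le_two (by linarith) hq (by simpa using hXq)

/-- **Partial sums of variances of rescaled truncated Gaussians.**  Fix `q > 2`.  There is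
a constant `C(q) > 0` depending only on `q` such that: if `X` has mean zero, variance
`σ²`, and `E_P|X|^q < ∞` under `P`, and `(Ỹ k)_{k≥1}` are independent mean-zero Gaussians
on `(Ω̃, P̃)` with variances `σ̃_k² = Var_P(X·1{|X| ≤ k^{1/q}})`, then, setting
`Ŷ k := (σ/σ̃_k)·Ỹ k`, for every integer `m ≥ 1`,
`∑_{k=m}^∞ Var_{P̃}(Ỹ k − Ŷ k) / k^{2/q} ≤ 4 C(q) E_P(|X|^q·1{|X|^q > m})`
(the sum converges). -/
theorem tail_variance_of_rescaled_truncations (q : ℝ) (hq : 2 < q) :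
    ∃ C : ℝ, 0 < C ∧
      ∀ (Ω Ω' : Type u) [MeasurableSpace Ω] [MeasurableSpace Ω']
        (P : Measure Ω) [IsProbabilityMeasure P]
        (P' : Measure Ω') [IsProbabilityMeasure P']
        (X : Ω → ℝ) (σ : ℝ) (Y : ℕ → Ω' → ℝ),
        Measurable X →
        (∫ ω, X ω ∂P = 0) →
        0 ≤ σ →
        variance X P = σ ^ 2 →
        Integrable (fun ω => |X ω| ^ q) P →
        (∀ k, Measurable (Y k)) →
        iIndepFun Y P' →
        (∀ k : ℕ, 1 ≤ k → Measure.map (Y k) P' =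
          gaussianReal 0
            (variance (fun ω => if |X ω| ≤ (k : ℝ) ^ (1 / q) then X ω else 0) P).toNNReal) →
        ∀ m : ℕ, 1 ≤ m →
          Summable (fun k : ℕ => if m ≤ k then
              variance (fun ω => Y k ω -
                  (σ / Real.sqrt (variance
                    (fun ω' => if |X ω'| ≤ (k : ℝ) ^ (1 / q) then X ω' else 0) P)) * Y k ω)
                P' / (k : ℝ) ^ (2 / q)
            else 0) ∧
          (∑' k : ℕ, if m ≤ k then
              variance (fun ω => Y k ω -
                  (σ / Real.sqrt (variance
                    (fun ω' => if |X ω'| ≤ (k : ℝ) ^ (1 / q) then X ω' else 0) P)) * Y k ω)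
                P' / (k : ℝ) ^ (2 / q)
            else 0)
            ≤ 4 * C * ∫ ω in {ω | (m : ℝ) < |X ω| ^ q}, |X ω| ^ q ∂P := by
  refine ⟨q / (2 * (q - 2)), div_pos (by linarith) (by linarith), ?_⟩
  intro Ω Ω' _ _ P _ P' _ X σ Y hX hmean hσ hvarX hXq hY _ hlaw m hm
  have hX₂ := memLp_two_of_integrable_abs_rpow hq.le hX.aestronglyMeasurable hXq
  have htrunc : ∀ k : ℕ, (fun ω => if |X ω| ≤ (k : ℝ) ^ (1 / q) then X ω else 0) =
      {ω | (k : ℝ) < |X ω| ^ q}ᶜ.indicator X := fun k => by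
    ext ω
    simp [Set.indicator_apply, one_div, Real.le_rpow_inv_iff_of_pos (abs_nonneg _) k.cast_nonneg
      (by linarith : 0 < q)]
  simp_rw [htrunc] at hlaw ⊢
  refine (fun h₀ h => ⟨summable_of_sum_range_le h₀ h, Real.tsum_le_of_sum_range_le h₀ h⟩)
    (fun k => ite_nonneg (div_nonneg (variance_nonneg _ _) (by positivity)) le_rfl) (fun n => ?_)
  rw [← sum_filter]
  calc _ ≤ ∑ k ∈ (range n).filter (m ≤ ·),
        2 * ((∫ ω in {ω | (k : ℝ) < |X ω| ^ q}, X ω ^ 2 ∂P) / (k : ℝ) ^ (2 / q)) :=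
        sum_le_sum fun k hk => by
          rw [← mul_div_assoc]
          gcongr
          exact variance_sub_rescaled_gaussian_le hX₂ hmean hσ hvarX
            (measurableSet_lt measurable_const (hX.abs.pow_const q)) (hY k).aemeasurable
            (hlaw k (hm.trans (mem_filter.1 hk).2))
    _ ≤ 2 * (q / (q - 2) * ∫ ω in {ω | (m : ℝ) < |X ω| ^ q}, |X ω| ^ q ∂P) := by
        rw [← mul_sum]
        gcongr
        exact sum_setIntegral_sq_div_rpow_le hq hX hX₂.integrable_sq hXq hm
          fun k hk => (mem_filter.1 hk).2
    _ = _ := by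
        field_simp
        ring
end
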